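/- Let G : ℝ^n → ℝ^n be continuous, H : ℝ^m → ℝ convex differentiable, A : ℝ^n → ℝ^m linear, and γ, τ > 0. The set of points u ∈ ℝ^n arising as the u-component of fixed points of the ADMM-based scheme (with G replacing prox of the regularizer, step parameter γ) equals the set of u-components of fixed points of the PDHG2-based scheme (with G replacing prox of the regularizer, dual step γ, primal step τ = 1/γ): both equal { u : u = G(u − (1/γ)A^T∇H(Au)) }. -/

import Mathlib

/-!
At a fixed point the multiplier update of ADMM forces `u = v`, and the extrapolation of PDHG2
gives `ū = u`. The prox step is the minimisation of a convex differentiable objective, so it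
holds exactly when its gradient vanishes; with the prox centre `u - (1/γ) y` this says
`y = -Aᵀ∇H(Au)`. Substituting this multiplier into the remaining `G`-step of either scheme
leaves `u = G(u - (1/γ) Aᵀ∇H(Au))`.
-/

open ContinuousLinearMap

/-- `proxProp lam F b w` expresses `w = prox_{lam·F}(b)`. -/
def proxProp {k : ℕ} (lam : ℝ) (F : EuclideanSpace ℝ (Fin k) → ℝ)
    (b w : EuclideanSpace ℝ (Fin k)) : Prop :=
  ∀ v, (1/2) * ‖w - b‖^2 + lam * F w ≤ (1/2) * ‖v - b‖^2 + lam * F v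

open Set

section Convex

variable {E : Type*} [NormedAddCommGroup E] [NormedSpace ℝ E] {f : E → ℝ} {f' : StrongDual ℝ E}
  {x : E}

theorem ConvexOn.add_apply_sub_le_of_hasFDerivAt (hf : ConvexOn ℝ univ f)
    (hf' : HasFDerivAt f f' x) (z : E) : f x + f' (z - x) ≤ f z := by
  have hline : ConvexOn ℝ univ fun t : ℝ => f (x + t • (z - x)) :=
    (hf.comp_affineMap (AffineMap.lineMap x z)).congr fun t _ => by
      simp [AffineMap.lineMap_apply_module', add_comm]
  have hslope := hline.le_slope_of_hasDerivAt (mem_univ 0) (mem_univ 1) one_pos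
    (hf'.hasLineDerivAt (z - x))
  simp only [slope_def_field, zero_smul, add_zero, one_smul, add_sub_cancel, sub_zero,
    div_one] at hslope
  linarith

theorem ConvexOn.isMinOn_univ_iff_of_hasFDerivAt (hf : ConvexOn ℝ univ f)
    (hf' : HasFDerivAt f f' x) : IsMinOn f univ x ↔ f' = 0 := by
  refine ⟨fun hmin => (hmin.isLocalMin Filter.univ_mem).hasFDerivAt_eq_zero hf', ?_⟩
  rintro rfl z -
  simpa using hf.add_apply_sub_le_of_hasFDerivAt hf' z

theorem convexOn_univ_half_norm_sub_sq (b : E) :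
    ConvexOn ℝ univ fun v : E => (1/2) * ‖v - b‖ ^ 2 :=
  (((convexOn_univ_norm.translate_right (-b)).pow (fun _ _ => norm_nonneg _) 2).smul
    (by norm_num : (0:ℝ) ≤ 1/2)).congr fun v _ => by simp [sub_eq_add_neg, add_comm]

end Convex

section Gradient

variable {E F : Type*} [NormedAddCommGroup E] [InnerProductSpace ℝ E] [CompleteSpace E]
  [NormedAddCommGroup F] [InnerProductSpace ℝ F] [CompleteSpace F]

theorem hasGradientAt_half_norm_sub_sq (b x : E) :
    HasGradientAt (fun v : E => (1/2) * ‖v - b‖ ^ 2) (x - b) x := by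
  rw [hasGradientAt_iff_hasFDerivAt]
  refine (((hasFDerivAt_id x).sub_const b).norm_sq.const_mul (1/2 : ℝ)).congr_fderiv ?_
  ext v
  simp

theorem HasGradientAt.comp_continuousLinearMap {H : F → ℝ} {g : F} {x : E} (A : E →L[ℝ] F)
    (hH : HasGradientAt H g (A x)) : HasGradientAt (fun x => H (A x)) (adjoint A g) x := by
  rw [hasGradientAt_iff_hasFDerivAt] at *
  refine (hH.comp x A.hasFDerivAt).congr_fderiv ?_
  ext v
  simp [adjoint_inner_left]

end Gradient

section ProxProp

variable {k : ℕ} {lam : ℝ} {F : EuclideanSpace ℝ (Fin k) → ℝ} {g u : EuclideanSpace ℝ (Fin k)}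

theorem proxProp_iff (hF : ConvexOn ℝ univ F) (hg : HasGradientAt F g u) (hlam : 0 ≤ lam)
    (b : EuclideanSpace ℝ (Fin k)) : proxProp lam F b u ↔ u = b - lam • g := by
  have hconv : ConvexOn ℝ univ fun v => (1/2) * ‖v - b‖ ^ 2 + lam * F v :=
    (convexOn_univ_half_norm_sub_sq b).add (hF.smul hlam)
  have hgrad : HasGradientAt (fun v => (1/2) * ‖v - b‖ ^ 2 + lam * F v) (u - b + lam • g) u := by
    rw [hasGradientAt_iff_hasFDerivAt] at *
    refine ((hasGradientAt_half_norm_sub_sq b u).hasFDerivAt.add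
      (hg.const_mul lam)).congr_fderiv ?_
    simp
  refine isMinOn_univ_iff.symm.trans
    ((hconv.isMinOn_univ_iff_of_hasFDerivAt hgrad.hasFDerivAt).trans ?_)
  rw [LinearIsometryEquiv.map_eq_zero_iff, sub_add_eq_add_sub, sub_eq_zero, eq_sub_iff_add_eq]

theorem proxProp_sub_smul_self_iff (hF : ConvexOn ℝ univ F) (hg : HasGradientAt F g u)
    (hlam : 0 < lam) (y : EuclideanSpace ℝ (Fin k)) :
    proxProp lam F (u - lam • y) u ↔ y = -g := by
  rw [proxProp_iff hF hg hlam.le, eq_sub_iff_add_eq, sub_eq_add_neg, add_right_inj, ← smul_neg,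
    smul_right_inj hlam.ne', eq_comm, neg_eq_iff_eq_neg]

end ProxProp

theorem admm_pdhg2_fixed_point_sets_general {n m : ℕ}
    (G : EuclideanSpace ℝ (Fin n) → EuclideanSpace ℝ (Fin n))
    (H : EuclideanSpace ℝ (Fin m) → ℝ)
    (H' : EuclideanSpace ℝ (Fin m) → EuclideanSpace ℝ (Fin m))
    (hHconv : ConvexOn ℝ Set.univ H)
    (hH : ∀ x, HasGradientAt H (H' x) x)
    (A : EuclideanSpace ℝ (Fin n) →L[ℝ] EuclideanSpace ℝ (Fin m))
    (γ θ : ℝ) (hγ : 0 < γ) :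
    ({u : EuclideanSpace ℝ (Fin n) | ∃ v y,
        proxProp (1/γ) (fun x => H (A x)) (v - (1/γ) • y) u ∧
        v = G (u + (1/γ) • y) ∧
        y = y + γ • (u - v)} =
      {u : EuclideanSpace ℝ (Fin n) | u = G (u - (1/γ) • (adjoint A) (H' (A u)))}) ∧
    ({u : EuclideanSpace ℝ (Fin n) | ∃ y ubar,
        y = y + γ • ubar - γ • G ((1/γ) • y + ubar) ∧
        proxProp (1/γ) (fun x => H (A x)) (u - (1/γ) • y) u ∧
        ubar = u + θ • (u - u)} =
      {u : EuclideanSpace ℝ (Fin n) | u = G (u - (1/γ) • (adjoint A) (H' (A u)))}) := by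
  have hprox (u y : EuclideanSpace ℝ (Fin n)) :
      proxProp (1/γ) (fun x => H (A x)) (u - (1/γ) • y) u ↔ y = -adjoint A (H' (A u)) :=
    proxProp_sub_smul_self_iff (hHconv.comp_linearMap A.toLinearMap)
      ((hH (A u)).comp_continuousLinearMap A) (one_div_pos.mpr hγ) y
  have hcancel (a b : EuclideanSpace ℝ (Fin n)) : γ • (a - b) = 0 ↔ a = b := by
    rw [smul_eq_zero, sub_eq_zero, or_iff_right hγ.ne']
  have harg (u P : EuclideanSpace ℝ (Fin n)) : u + (1/γ) • -P = u - (1/γ) • P := by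
    rw [smul_neg, sub_eq_add_neg]
  constructor <;> ext u <;> constructor
  · rintro ⟨v, y, hu, hv, hy⟩
    obtain rfl : u = v := (hcancel u v).mp (left_eq_add.mp hy)
    obtain rfl := (hprox u y).mp hu
    rwa [harg] at hv
  · intro hu
    exact ⟨u, _, (hprox u _).mpr rfl, by rwa [harg], by simp⟩
  · rintro ⟨y, _, hy, hu, rfl⟩
    rw [sub_self, smul_zero, add_zero, add_sub_assoc, ← smul_sub, add_comm ((1/γ) • y) u] at hy
    obtain rfl := (hprox u y).mp hu
    rw [mem_ofPred_eq, ← harg]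
    exact (hcancel _ _).mp (left_eq_add.mp hy)
  · intro hu
    refine ⟨_, u, ?_, (hprox u _).mpr rfl, by simp⟩
    rw [add_comm ((1/γ) • _) u, harg, ← hu, add_sub_cancel_right]

/-- The `u`-components of fixed points of the ADMM-based scheme and of the PDHG2-based
scheme (with primal step `τ = 1/γ`) both coincide with
`{u : u = G(u − (1/γ)Aᵀ∇H(Au))}`. -/
theorem admm_pdhg2_fixed_point_sets {n m : ℕ}
    (G : EuclideanSpace ℝ (Fin n) → EuclideanSpace ℝ (Fin n)) (hG : Continuous G)
    (H : EuclideanSpace ℝ (Fin m) → ℝ)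
    (H' : EuclideanSpace ℝ (Fin m) → EuclideanSpace ℝ (Fin m))
    (hHconv : ConvexOn ℝ Set.univ H)
    (hH : ∀ x, HasGradientAt H (H' x) x)
    (A : EuclideanSpace ℝ (Fin n) →L[ℝ] EuclideanSpace ℝ (Fin m))
    (γ θ : ℝ) (hγ : 0 < γ) :
    ({u : EuclideanSpace ℝ (Fin n) | ∃ v y,
        proxProp (1/γ) (fun x => H (A x)) (v - (1/γ) • y) u ∧
        v = G (u + (1/γ) • y) ∧
        y = y + γ • (u - v)} =
      {u : EuclideanSpace ℝ (Fin n) | u = G (u - (1/γ) • (adjoint A) (H' (A u)))}) ∧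
    ({u : EuclideanSpace ℝ (Fin n) | ∃ y ubar,
        y = y + γ • ubar - γ • G ((1/γ) • y + ubar) ∧
        proxProp (1/γ) (fun x => H (A x)) (u - (1/γ) • y) u ∧
        ubar = u + θ • (u - u)} =
      {u : EuclideanSpace ℝ (Fin n) | u = G (u - (1/γ) • (adjoint A) (H' (A u)))}) :=
  admm_pdhg2_fixed_point_sets_general G H H' hHconv hH A γ θ hγ
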